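/- arXiv:2403.15038 — 3 statements merged into one kernel-verified Lean document; each statement's English description precedes it below -/
import Mathlib

section
/- Let ξ be an exponential random variable with rate 1, and let ρ, a, δ > 0 and p ≥ 0 satisfy p < (δ+a)(1−ρ). Then E[(ξ+a)^p e^{ρξ} 1_{ξ ≥ δ}] ≤ (1 − ρ − p/(a+δ))^{−1} (δ+a)^p e^{−δ(1−ρ)}. -/
/-!
The tail condition pins down the distribution function of `ξ`, so `ξ` has law `expMeasure 1`
and the expectation is `∫_δ^∞ e^{-x} (x + a)^p e^{ρx} dx`. The tangent-line bound
`y ≤ e^{y - 1}` gives `(x + a)^p ≤ (δ + a)^p e^{c (x - δ)}` with `c = p / (δ + a)`, and the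
resulting integral `∫_δ^∞ e^{-(1 - ρ - c) x} dx` is explicit and finite because `c < 1 - ρ`.
-/

open MeasureTheory ProbabilityTheory Real Set

lemma rpow_le_rpow_mul_exp {x y p : ℝ} (hx : 0 < x) (hy : 0 ≤ y) (hp : 0 ≤ p) :
    y ^ p ≤ x ^ p * exp (p / x * (y - x)) := by
  have hy_le : y ≤ x * exp ((y - x) / x) := by
    calc y = x * ((y - x) / x + 1) := by field_simp; ring
      _ ≤ x * exp ((y - x) / x) := by gcongr; exact add_one_le_exp _
  calc y ^ p ≤ (x * exp ((y - x) / x)) ^ p := rpow_le_rpow hy hy_le hp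
    _ = x ^ p * exp (p / x * (y - x)) := by
      rw [mul_rpow hx.le (exp_pos _).le, ← exp_mul]
      congr 2
      field_simp

namespace ProbabilityTheory

lemma map_eq_expMeasure_of_measure_lt {Ω : Type*} [MeasurableSpace Ω] {P : Measure Ω}
    [IsProbabilityMeasure P] {ξ : Ω → ℝ} (hξ : Measurable ξ) {r : ℝ} (hr : 0 < r)
    (htail : ∀ t, 0 ≤ t → P {ω | t < ξ ω} = ENNReal.ofReal (exp (-(r * t)))) :
    P.map ξ = expMeasure r := by
  have : IsProbabilityMeasure (P.map ξ) := Measure.isProbabilityMeasure_map hξ.aemeasurable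
  have : IsProbabilityMeasure (expMeasure r) := isProbabilityMeasure_expMeasure hr
  have hcdf : ∀ t, 0 ≤ t → P.real (ξ ⁻¹' Iic t) = 1 - exp (-(r * t)) := by
    intro t ht
    have hcompl : ξ ⁻¹' Iic t = {ω | t < ξ ω}ᶜ := by ext; simp
    rw [hcompl, probReal_compl_eq_one_sub (measurableSet_lt measurable_const hξ), measureReal_def,
      htail t ht, ENNReal.toReal_ofReal (exp_pos _).le]
  refine Measure.eq_of_cdf _ _ (StieltjesFunction.ext fun t => ?_)
  rw [cdf_expMeasure_eq hr, cdf_eq_real, map_measureReal_apply hξ measurableSet_Iic]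
  split_ifs with ht
  · exact hcdf t ht
  · refine le_antisymm ?_ measureReal_nonneg
    calc P.real (ξ ⁻¹' Iic t) ≤ P.real (ξ ⁻¹' Iic 0) :=
          measureReal_mono (preimage_mono (Iic_subset_Iic.mpr (not_le.mp ht).le))
      _ = 0 := by simp [hcdf 0 le_rfl]

lemma integral_expMeasure {r : ℝ} (hr : 0 ≤ r) (g : ℝ → ℝ) :
    ∫ x, g x ∂expMeasure r = ∫ x in Ici 0, r * exp (-(r * x)) * g x := by
  have hpdf : expMeasure r = volume.withDensity (exponentialPDF r) := rfl
  rw [hpdf, integral_withDensity_eq_integral_toReal_smul (f := exponentialPDF r)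
    (measurable_gammaPDFReal 1 r).ennreal_ofReal (ae_of_all _ fun _ => ENNReal.ofReal_lt_top),
    ← integral_indicator measurableSet_Ici]
  refine integral_congr_ae (ae_of_all _ fun x => ?_)
  by_cases hx : 0 ≤ x
  · simp [exponentialPDF_of_nonneg hx, hx, ENNReal.toReal_ofReal, hr, (exp_pos _).le]
  · simp [exponentialPDF_of_neg (not_le.mp hx), hx]

lemma integral_indicator_Ici_expMeasure {r δ : ℝ} (hr : 0 ≤ r) (hδ : 0 ≤ δ) (f : ℝ → ℝ) :
    ∫ x, (Ici δ).indicator f x ∂expMeasure r = ∫ x in Ici δ, r * exp (-(r * x)) * f x := by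
  simp only [integral_expMeasure hr, ← indicator_mul_right (Ici δ) (fun x => r * exp (-(r * x))) f]
  rw [setIntegral_indicator measurableSet_Ici, Ici_inter_Ici, max_eq_right hδ]

end ProbabilityTheory

lemma setIntegral_Ici_exp_neg_mul_rpow_le {ρ a δ p : ℝ} (hδa : 0 < δ + a) (hp : 0 ≤ p)
    (hlt : p < (δ + a) * (1 - ρ)) :
    ∫ x in Ici δ, exp (-x) * ((x + a) ^ p * exp (ρ * x))
      ≤ (1 - ρ - p / (a + δ))⁻¹ * (δ + a) ^ p * exp (-δ * (1 - ρ)) := by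
  set c := p / (δ + a) with hc
  set b := 1 - ρ - c with hb_def
  have hb : 0 < b := by
    have : c < 1 - ρ := (div_lt_iff₀ hδa).mpr (by linarith)
    linarith
  set K := (δ + a) ^ p * exp (-(c * δ))
  have hbound : ∀ x ∈ Ici δ, exp (-x) * ((x + a) ^ p * exp (ρ * x)) ≤ K * exp (-b * x) := by
    intro x (hx : δ ≤ x)
    have hexp : exp (-x) * exp (c * (x + a - (δ + a))) * exp (ρ * x)
        = exp (-(c * δ)) * exp (-b * x) := by
      simp only [← exp_add, hb_def]
      ring_nf
    calc exp (-x) * ((x + a) ^ p * exp (ρ * x))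
        ≤ exp (-x) * ((δ + a) ^ p * exp (c * (x + a - (δ + a))) * exp (ρ * x)) := by
          gcongr
          exact rpow_le_rpow_mul_exp hδa (by linarith) hp
      _ = K * exp (-b * x) := by linear_combination (δ + a) ^ p * hexp
  have hint : IntegrableOn (fun x => K * exp (-b * x)) (Ici δ) :=
    ((integrableOn_Ici_iff_integrableOn_Ioi).mpr (exp_neg_integrableOn_Ioi δ hb)).const_mul K
  have hnonneg : ∀ x ∈ Ici δ, 0 ≤ exp (-x) * ((x + a) ^ p * exp (ρ * x)) := by
    intro x (hx : δ ≤ x)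
    have : 0 ≤ x + a := by linarith
    positivity
  have hexp : exp (-(c * δ)) * exp (-b * δ) = exp (-δ * (1 - ρ)) := by
    simp only [← exp_add, hb_def]
    ring_nf
  calc ∫ x in Ici δ, exp (-x) * ((x + a) ^ p * exp (ρ * x))
      ≤ ∫ x in Ici δ, K * exp (-b * x) :=
        integral_mono_of_nonneg ((ae_restrict_iff' measurableSet_Ici).mpr (ae_of_all _ hnonneg))
          hint ((ae_restrict_iff' measurableSet_Ici).mpr (ae_of_all _ hbound))
    _ = K * (exp (-b * δ) / b) := by
        rw [integral_const_mul, integral_Ici_eq_integral_Ioi,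
          integral_exp_mul_Ioi (neg_neg_of_pos hb), neg_div_neg_eq]
    _ = (1 - ρ - p / (a + δ))⁻¹ * (δ + a) ^ p * exp (-δ * (1 - ρ)) := by
        rw [add_comm a δ, ← hc, ← hb_def, ← hexp]
        ring

theorem exponential_poly_exp_tail_bound_general
    {Ω : Type*} [MeasurableSpace Ω] (P : Measure Ω) [IsProbabilityMeasure P]
    (ξ : Ω → ℝ) (hmeas : Measurable ξ)
    (hexp : ∀ t : ℝ, 0 ≤ t → P {ω | t < ξ ω} = ENNReal.ofReal (Real.exp (-t)))
    (ρ a δ p : ℝ) (ha : 0 < a) (hδ : 0 < δ) (hp : 0 ≤ p)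
    (hlt : p < (δ + a) * (1 - ρ)) :
    ∫ ω, Set.indicator {ω | δ ≤ ξ ω}
        (fun ω => (ξ ω + a) ^ p * Real.exp (ρ * ξ ω)) ω ∂P
      ≤ (1 - ρ - p / (a + δ))⁻¹ * (δ + a) ^ p * Real.exp (-δ * (1 - ρ)) := by
  set f : ℝ → ℝ := fun x => (x + a) ^ p * exp (ρ * x)
  have hlaw : P.map ξ = expMeasure 1 :=
    map_eq_expMeasure_of_measure_lt hmeas one_pos (by simpa only [one_mul] using hexp)
  calc _ = ∫ x, (Ici δ).indicator f x ∂(P.map ξ) := by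
        rw [integral_map hmeas.aemeasurable
          ((by fun_prop : Measurable f).indicator measurableSet_Ici).aestronglyMeasurable]
        rfl
    _ = ∫ x in Ici δ, exp (-x) * f x := by
        simp only [hlaw, integral_indicator_Ici_expMeasure zero_le_one hδ.le, one_mul]
    _ ≤ _ := setIntegral_Ici_exp_neg_mul_rpow_le (by linarith) hp hlt

theorem exponential_poly_exp_tail_bound
    {Ω : Type*} [MeasurableSpace Ω] (P : Measure Ω) [IsProbabilityMeasure P]
    (ξ : Ω → ℝ) (hmeas : Measurable ξ) (hξ0 : ∀ ω, 0 ≤ ξ ω)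
    (hexp : ∀ t : ℝ, 0 ≤ t → P {ω | t < ξ ω} = ENNReal.ofReal (Real.exp (-t)))
    (ρ a δ p : ℝ) (hρ : 0 < ρ) (ha : 0 < a) (hδ : 0 < δ) (hp : 0 ≤ p)
    (hlt : p < (δ + a) * (1 - ρ)) :
    ∫ ω, Set.indicator {ω | δ ≤ ξ ω}
        (fun ω => (ξ ω + a) ^ p * Real.exp (ρ * ξ ω)) ω ∂P
      ≤ (1 - ρ - p / (a + δ))⁻¹ * (δ + a) ^ p * Real.exp (-δ * (1 - ρ)) :=
  exponential_poly_exp_tail_bound_general P ξ hmeas hexp ρ a δ p ha hδ hp hlt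
end

section
/- Let Z be a chi-squared random variable with n degrees of freedom (n ≥ 1). Then for all x ≥ 0, P(Z ≤ n·e^{−(1+2x/n)}) ≤ e^{−x}. -/
/-!
Chernoff bound for the lower tail: for `λ ≥ 0`, `P(Z ≤ t) ≤ e^{λt} E[e^{-λZ}]`, and for a
`Gamma(a, r)` variable `E[e^{-λZ}] = (r / (r + λ))^a`. Taking `t = aδ/r` and `λ = r(δ⁻¹ - 1)`
gives `P(Z ≤ aδ/r) ≤ (δ e^{1-δ})^a ≤ (e δ)^a`. For `χ²(n) = Gamma(n/2, 1/2)` and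
`δ = e^{-1-2x/n}` the right-hand side is `e^{-x}`.
-/

open MeasureTheory ProbabilityTheory Real Set

lemma ofReal_exp_neg_mul_mul_gammaPDF {a r l : ℝ} (hr : 0 < r) (hrl : 0 < r + l) (z : ℝ) :
    ENNReal.ofReal (exp (-(l * z))) * gammaPDF a r z
      = ENNReal.ofReal ((r / (r + l)) ^ a) * gammaPDF a (r + l) z := by
  rcases lt_or_ge z 0 with hz | hz
  · simp only [gammaPDF_of_neg hz, mul_zero]
  rw [gammaPDF_of_nonneg hz, gammaPDF_of_nonneg hz, ← ENNReal.ofReal_mul (exp_nonneg _),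
    ← ENNReal.ofReal_mul (by positivity), div_rpow hr.le hrl.le]
  congr 1
  have hexp : exp (-(l * z)) * exp (-(r * z)) = exp (-((r + l) * z)) := by
    rw [← exp_add]; ring_nf
  have : (r + l) ^ a ≠ 0 := by positivity
  rw [← hexp]
  field_simp

lemma lintegral_exp_neg_mul_gammaMeasure {a r l : ℝ} (ha : 0 < a) (hr : 0 < r)
    (hrl : 0 < r + l) :
    ∫⁻ z, ENNReal.ofReal (exp (-(l * z))) ∂gammaMeasure a r
      = ENNReal.ofReal ((r / (r + l)) ^ a) := by
  have hpdf : Measurable (gammaPDF a r) := (measurable_gammaPDFReal a r).ennreal_ofReal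
  rw [gammaMeasure, lintegral_withDensity_eq_lintegral_mul _ hpdf (by fun_prop)]
  simp only [Pi.mul_apply, mul_comm (gammaPDF a r _), ofReal_exp_neg_mul_mul_gammaPDF hr hrl]
  rw [lintegral_const_mul' _ _ ENNReal.ofReal_ne_top, lintegral_gammaPDF_eq_one ha hrl, mul_one]

lemma measure_Iic_le_ofReal_exp_mul_lintegral (μ : Measure ℝ) {l : ℝ} (hl : 0 ≤ l) (t : ℝ) :
    μ (Iic t) ≤ ENNReal.ofReal (exp (l * t)) * ∫⁻ z, ENNReal.ofReal (exp (-(l * z))) ∂μ := by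
  calc μ (Iic t) = ∫⁻ _ in Iic t, 1 ∂μ := (setLIntegral_one _).symm
    _ ≤ ∫⁻ z in Iic t, ENNReal.ofReal (exp (l * t)) * ENNReal.ofReal (exp (-(l * z))) ∂μ := by
      refine setLIntegral_mono' measurableSet_Iic fun z (hz : z ≤ t) => ?_
      rw [← ENNReal.ofReal_mul (exp_nonneg _), ← exp_add, ENNReal.one_le_ofReal]
      exact one_le_exp (by nlinarith)
    _ ≤ _ := by
      rw [← lintegral_const_mul' _ _ ENNReal.ofReal_ne_top]
      exact setLIntegral_le_lintegral _ _

lemma gammaMeasure_Iic_le {a r δ : ℝ} (ha : 0 < a) (hr : 0 < r) (hδ : 0 < δ) (hδ1 : δ ≤ 1) :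
    gammaMeasure a r (Iic (a * δ / r)) ≤ ENNReal.ofReal ((δ * exp (1 - δ)) ^ a) := by
  set l := r * (δ⁻¹ - 1) with hl_def
  have hl : 0 ≤ l := mul_nonneg hr.le (sub_nonneg.mpr ((one_le_inv₀ hδ).mpr hδ1))
  have hrl : r / (r + l) = δ := by rw [hl_def]; field_simp; ring
  have hlt : l * (a * δ / r) = (1 - δ) * a := by rw [hl_def]; field_simp
  calc gammaMeasure a r (Iic (a * δ / r))
      ≤ ENNReal.ofReal (exp (l * (a * δ / r))) * ENNReal.ofReal ((r / (r + l)) ^ a) := by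
        rw [← lintegral_exp_neg_mul_gammaMeasure ha hr (by positivity)]
        exact measure_Iic_le_ofReal_exp_mul_lintegral _ hl _
    _ = ENNReal.ofReal ((δ * exp (1 - δ)) ^ a) := by
        rw [← ENNReal.ofReal_mul (exp_nonneg _), hrl, hlt, mul_rpow hδ.le (exp_nonneg _),
          exp_mul, mul_comm]

theorem chi_squared_lower_tail_general
    {Ω : Type*} [MeasurableSpace Ω] (P : Measure Ω)
    (n : ℕ) (hn : 1 ≤ n) (Z : Ω → ℝ) (hmeas : Measurable Z)
    (hZ : Measure.map Z P = gammaMeasure ((n : ℝ) / 2) (1 / 2))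
    (x : ℝ) (hx : 0 ≤ x) :
    P {ω | Z ω ≤ (n : ℝ) * Real.exp (-(1 + 2 * x / n))} ≤ ENNReal.ofReal (Real.exp (-x)) := by
  have hn0 : (0 : ℝ) < n := by exact_mod_cast hn
  set δ := exp (-(1 + 2 * x / n))
  have hδ1 : δ ≤ 1 := exp_le_one_iff.mpr (by linarith [show 0 ≤ 2 * x / n by positivity])
  have hδx : (δ * exp 1) ^ ((n : ℝ) / 2) = exp (-x) := by
    rw [← exp_add, ← exp_mul]; congr 1; field_simp; ring
  have ht : (n : ℝ) * δ = n / 2 * δ / (1 / 2) := by ring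
  calc P {ω | Z ω ≤ n * δ} = gammaMeasure ((n : ℝ) / 2) (1 / 2) (Iic (n / 2 * δ / (1 / 2))) := by
        rw [← hZ, Measure.map_apply hmeas measurableSet_Iic, ← ht]; rfl
    _ ≤ ENNReal.ofReal ((δ * exp (1 - δ)) ^ ((n : ℝ) / 2)) :=
        gammaMeasure_Iic_le (by positivity) (by norm_num) (exp_pos _) hδ1
    _ ≤ ENNReal.ofReal (exp (-x)) := by
        rw [← hδx]
        gcongr
        exact sub_le_self _ (exp_pos _).le

theorem chi_squared_lower_tail
    {Ω : Type*} [MeasurableSpace Ω] (P : Measure Ω) [IsProbabilityMeasure P]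
    (n : ℕ) (hn : 1 ≤ n) (Z : Ω → ℝ) (hmeas : Measurable Z)
    (hZ : Measure.map Z P = gammaMeasure ((n : ℝ) / 2) (1 / 2))
    (x : ℝ) (hx : 0 ≤ x) :
    P {ω | Z ω ≤ (n : ℝ) * Real.exp (-(1 + 2 * x / n))} ≤ ENNReal.ofReal (Real.exp (-x)) :=
  chi_squared_lower_tail_general P n hn Z hmeas hZ x hx
end

section
/- Let n ≥ 1, let ν₁,…,ν_n ≥ 0 with Σₖ νₖ = 1, and let b ≥ 0. Then (1/n)·Σₖ (b·νₖ + 1)·νₖ/(1 + b·νₖ) ≤ (b/n + 1/n)/(1 + b/n). Consequently, with B(τ,ν) as defined below and τₖ := b·νₖ, we have (1/n)·Σₖ B(τₖ, νₖ) ≤ (τ̄ + 1/n)/(τ̄ + 1), where τ̄ := b/n. -/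
/-- The oracle relative-risk function B(τ,ν). -/
noncomputable def oracleB (τ ν : ℝ) : ℝ :=
  τ / (1 + τ) + (1 / (1 + τ)) * (ν / (1 + τ * (1 - ν)))

theorem compound_group_oracle_bound {n : ℕ} (hn : 0 < n) (ν : Fin n → ℝ)
    (hν0 : ∀ k, 0 ≤ ν k) (hν1 : ∑ k, ν k = 1) (b : ℝ) (hb : 0 ≤ b) :
    ((1 : ℝ) / n) * ∑ k, (b * ν k + 1) * ν k / (1 + b * ν k)
        ≤ (b / n + 1 / n) / (1 + b / n) ∧
    ((1 : ℝ) / n) * ∑ k, oracleB (b * ν k) (ν k)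
        ≤ (b / n + 1 / n) / (b / n + 1) := by
  have hncast : (0:ℝ) < (n:ℝ) := by exact_mod_cast hn
  have hn1 : (1:ℝ) ≤ (n:ℝ) := by exact_mod_cast hn
  have hνle1 : ∀ k, ν k ≤ 1 := by
    intro k
    rw [← hν1]
    exact Finset.single_le_sum (fun i _ => hν0 i) (Finset.mem_univ k)
  set c : ℝ := 1 / (n:ℝ) with hc
  have hcpos : 0 < c := by positivity
  have hD : (0:ℝ) < 1 + b * c := by positivity
  constructor
  · have hsum : ∑ k, (b * ν k + 1) * ν k / (1 + b * ν k) = 1 := by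
      have he : ∀ k : Fin n, (b * ν k + 1) * ν k / (1 + b * ν k) = ν k := by
        intro k
        have h1 : (0:ℝ) < 1 + b * ν k := by
          have := hν0 k; positivity
        rw [div_eq_iff h1.ne']
        ring
      simp_rw [he]
      exact hν1
    rw [hsum, mul_one]
    have hrhs : (b / n + 1 / n) / (1 + b / n) = (b + 1) / ((n:ℝ) + b) := by
      field_simp
    rw [hrhs, div_le_div_iff₀ hncast (by positivity)]
    nlinarith
  · -- pointwise bound: oracleB (b * ν k) (ν k) ≤ P + Q * ν k
    set P : ℝ := (1 + b) * (c / (1 + b * c) - c / (1 + b * c) ^ 2) with hP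
    set Q : ℝ := (1 + b) / (1 + b * c) ^ 2 with hQ
    have key : ∀ k, oracleB (b * ν k) (ν k) ≤ P + Q * ν k := by
      intro k
      set x := ν k with hx
      have hx0 : 0 ≤ x := hν0 k
      have hx1 : x ≤ 1 := hνle1 k
      have hd1 : (0:ℝ) < 1 + b * x := by positivity
      have hbx : 0 ≤ b * x * (1 - x) :=
        mul_nonneg (mul_nonneg hb hx0) (by linarith)
      have hd2 : (0:ℝ) < 1 + b * x * (1 - x) := by linarith
      have step1 : oracleB (b * x) x ≤ (1 + b) * x / (1 + b * x) := by
        unfold oracleB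
        have h1 : x / (1 + b * x * (1 - x)) ≤ x := by
          apply div_le_self hx0
          linarith
        have h2 : (1 / (1 + b * x)) * (x / (1 + b * x * (1 - x)))
            ≤ (1 / (1 + b * x)) * x := by
          apply mul_le_mul_of_nonneg_left h1 (by positivity)
        calc b * x / (1 + b * x) + (1 / (1 + b * x)) * (x / (1 + b * x * (1 - x)))
            ≤ b * x / (1 + b * x) + (1 / (1 + b * x)) * x := by linarith
          _ = (1 + b) * x / (1 + b * x) := by field_simp; ring
      have tangent : x / (1 + b * x) ≤ c / (1 + b * c) + (x - c) / ((1 + b * c) ^ 2) := by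
        rw [div_add_div _ _ hD.ne' (by positivity), div_le_div_iff₀ hd1 (by positivity)]
        nlinarith [mul_nonneg hb (sq_nonneg (x - c)), sq_nonneg (x - c)]
      have step2 : (1 + b) * x / (1 + b * x) ≤ P + Q * x := by
        have h3 : (1 + b) * x / (1 + b * x) = (1 + b) * (x / (1 + b * x)) := by ring
        have h4 : P + Q * x = (1 + b) * (c / (1 + b * c) + (x - c) / ((1 + b * c) ^ 2)) := by
          rw [hP, hQ]; ring
        rw [h3, h4]
        exact mul_le_mul_of_nonneg_left tangent (by linarith)
      linarith
    have hsum2 : ∑ k, oracleB (b * ν k) (ν k) ≤ (n:ℝ) * P + Q := by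
      calc ∑ k, oracleB (b * ν k) (ν k) ≤ ∑ k, (P + Q * ν k) :=
            Finset.sum_le_sum fun k _ => key k
        _ = (n:ℝ) * P + Q := by
            rw [Finset.sum_add_distrib, Finset.sum_const, Finset.card_univ,
              Fintype.card_fin, ← Finset.mul_sum, hν1, nsmul_eq_mul, mul_one]
    have hfinal : ((1:ℝ)/n) * ((n:ℝ) * P + Q) = (b / n + 1 / n) / (b / n + 1) := by
      rw [hP, hQ, hc]
      have h1 : (0:ℝ) < 1 + b * (1 / (n:ℝ)) := by positivity
      field_simp
      ring
    calc ((1:ℝ)/n) * ∑ k, oracleB (b * ν k) (ν k)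
        ≤ ((1:ℝ)/n) * ((n:ℝ) * P + Q) := by
          apply mul_le_mul_of_nonneg_left hsum2 (by positivity)
      _ = (b / n + 1 / n) / (b / n + 1) := hfinal
end
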